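/- Let α, β ∈ R^m with σ(α) = σ(β) and let 𝒢 be a signature Gröbner basis up to signature σ(α). If α and β are both regular top s-reduced w.r.t. 𝒢 (no regular top s-reduction step applies to either), then lt(ᾱ) = lt(β̄) or ᾱ = β̄ = 0. Moreover, if α and β are both regular s-reduced w.r.t. 𝒢 (no regular s-reduction step at all applies to either), then ᾱ = β̄. -/

import Mathlib

open MvPolynomial

namespace SigGB

/-- A monomial order on the monomials of `R = K[x₁,…,xₙ]` (represented by their
exponent vectors in `Fin n →₀ ℕ`) together with a compatible module monomial order
on the module monomials of `R^m` (represented by pairs `(μ, i)` for `x^μ·eᵢ`). -/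
structure SigOrder (n m : ℕ) : Type where
  /-- the monomial order `≤` on `R` -/
  rle : (Fin n →₀ ℕ) → (Fin n →₀ ℕ) → Prop
  /-- the module monomial order `≤` on `R^m` -/
  mle : (Fin n →₀ ℕ) × Fin m → (Fin n →₀ ℕ) × Fin m → Prop
  rle_refl : ∀ a, rle a a
  rle_trans : ∀ {a b c}, rle a b → rle b c → rle a c
  rle_antisymm : ∀ {a b}, rle a b → rle b a → a = b
  rle_total : ∀ a b, rle a b ∨ rle b a
  rle_wf : WellFounded fun a b => rle a b ∧ a ≠ b
  rle_add : ∀ (c : Fin n →₀ ℕ) {a b}, rle a b → rle (c + a) (c + b)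
  mle_refl : ∀ S, mle S S
  mle_trans : ∀ {S T U}, mle S T → mle T U → mle S U
  mle_antisymm : ∀ {S T}, mle S T → mle T S → S = T
  mle_total : ∀ S T, mle S T ∨ mle T S
  mle_wf : WellFounded fun S T => mle S T ∧ S ≠ T
  mle_add : ∀ (c : Fin n →₀ ℕ) {S T}, mle S T → mle (c + S.1, S.2) (c + T.1, T.2)
  compat : ∀ (a b : Fin n →₀ ℕ) (i : Fin m), rle a b ↔ mle (a, i) (b, i)

variable {K : Type*} [Field K] {n m : ℕ}

/-- the strict monomial order -/
def SigOrder.rlt (O : SigOrder n m) (a b : Fin n →₀ ℕ) : Prop :=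
  O.rle a b ∧ a ≠ b

/-- the strict module monomial order -/
def SigOrder.mlt (O : SigOrder n m) (S T : (Fin n →₀ ℕ) × Fin m) : Prop :=
  O.mle S T ∧ S ≠ T

/-- divisibility of module monomials: `S ∣ T` iff `T = c·S` for some monomial `c` -/
def mmDvd (S T : (Fin n →₀ ℕ) × Fin m) : Prop :=
  ∃ c : Fin n →₀ ℕ, T = (c + S.1, S.2)

/-- `π : R^m → R`, `α ↦ Σ αᵢ fᵢ` -/
noncomputable def proj (f α : Fin m → MvPolynomial (Fin n) K) : MvPolynomial (Fin n) K :=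
  ∑ i, α i * f i

open Classical in
/-- the `≤`-maximal monomial of `p` (junk value `0` for `p = 0`) -/
noncomputable def leadMon (O : SigOrder n m) (p : MvPolynomial (Fin n) K) : Fin n →₀ ℕ :=
  if h : ∃ μ, μ ∈ p.support ∧ ∀ ν ∈ p.support, O.rle ν μ then h.choose else 0

/-- the lead coefficient of `p` -/
noncomputable def leadCoeff (O : SigOrder n m) (p : MvPolynomial (Fin n) K) : K :=
  p.coeff (leadMon O p)

/-- the lead term `lt(p)` (a term, i.e. monomial together with its coefficient) -/
noncomputable def leadTerm (O : SigOrder n m) (p : MvPolynomial (Fin n) K) :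
    MvPolynomial (Fin n) K :=
  monomial (leadMon O p) (leadCoeff O p)

/-- `lt(p) ≃ lt(q)`: the lead terms agree up to a nonzero scalar -/
def LeadTermAssoc (O : SigOrder n m) (p q : MvPolynomial (Fin n) K) : Prop :=
  p ≠ 0 ∧ q ≠ 0 ∧ leadMon O p = leadMon O q

open Classical in
/-- the module monomial of the signature `σ(α)`: the `≤`-maximal module monomial
occurring in `α` (junk value for `α = 0`) -/
noncomputable def sigMon [NeZero m] (O : SigOrder n m)
    (α : Fin m → MvPolynomial (Fin n) K) : (Fin n →₀ ℕ) × Fin m :=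
  if h : ∃ S : (Fin n →₀ ℕ) × Fin m, (α S.2).coeff S.1 ≠ 0 ∧
      ∀ T : (Fin n →₀ ℕ) × Fin m, (α T.2).coeff T.1 ≠ 0 → O.mle T S
  then h.choose
  else (0, ⟨0, Nat.pos_of_ne_zero (NeZero.ne m)⟩)

/-- the coefficient of the signature term of `α` -/
noncomputable def sigCoeff [NeZero m] (O : SigOrder n m)
    (α : Fin m → MvPolynomial (Fin n) K) : K :=
  (α (sigMon O α).2).coeff (sigMon O α).1

/-- `b` is a (not necessarily monic) monomial of `R` -/
def IsMonomial (b : MvPolynomial (Fin n) K) : Prop :=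
  ∃ (ν : Fin n →₀ ℕ) (c : K), c ≠ 0 ∧ b = monomial ν c

/-- `b·β` s-reduces the term of `π(α)` at the monomial `μ`:
`b` is a monomial, `μ` is a term of `π(α)`, `lt(b·π(β))` equals that term, and
`σ(b·β) ≤ σ(α)`. -/
def SRed [NeZero m] (O : SigOrder n m) (f α β : Fin m → MvPolynomial (Fin n) K)
    (b : MvPolynomial (Fin n) K) (μ : Fin n →₀ ℕ) : Prop :=
  IsMonomial b ∧ (proj f α).coeff μ ≠ 0 ∧
  leadTerm O (b * proj f β) = monomial μ ((proj f α).coeff μ) ∧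
  O.mle (sigMon O (b • β)) (sigMon O α)

/-- a regular s-reduction: additionally `σ(b·β) ≠ σ(α)` (as module monomials) -/
def RegSRed [NeZero m] (O : SigOrder n m) (f α β : Fin m → MvPolynomial (Fin n) K)
    (b : MvPolynomial (Fin n) K) (μ : Fin n →₀ ℕ) : Prop :=
  SRed O f α β b μ ∧ sigMon O (b • β) ≠ sigMon O α

/-- one s-reduction step w.r.t. `G` -/
def Step [NeZero m] (O : SigOrder n m) (f : Fin m → MvPolynomial (Fin n) K)
    (G : Set (Fin m → MvPolynomial (Fin n) K))
    (α γ : Fin m → MvPolynomial (Fin n) K) : Prop :=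
  ∃ β ∈ G, ∃ b μ, SRed O f α β b μ ∧ γ = α - b • β

/-- one regular s-reduction step w.r.t. `G` -/
def RegStep [NeZero m] (O : SigOrder n m) (f : Fin m → MvPolynomial (Fin n) K)
    (G : Set (Fin m → MvPolynomial (Fin n) K))
    (α γ : Fin m → MvPolynomial (Fin n) K) : Prop :=
  ∃ β ∈ G, ∃ b μ, RegSRed O f α β b μ ∧ γ = α - b • β

/-- `α` s-reduces to zero w.r.t. `G`: some sequence of s-reduction steps turns it
into a syzygy -/
def SReducesToZero [NeZero m] (O : SigOrder n m) (f : Fin m → MvPolynomial (Fin n) K)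
    (G : Set (Fin m → MvPolynomial (Fin n) K))
    (α : Fin m → MvPolynomial (Fin n) K) : Prop :=
  ∃ γ, Relation.ReflTransGen (Step O f G) α γ ∧ proj f γ = 0

/-- `α` regular s-reduces to zero w.r.t. `G` -/
def RegSReducesToZero [NeZero m] (O : SigOrder n m) (f : Fin m → MvPolynomial (Fin n) K)
    (G : Set (Fin m → MvPolynomial (Fin n) K))
    (α : Fin m → MvPolynomial (Fin n) K) : Prop :=
  ∃ γ, Relation.ReflTransGen (RegStep O f G) α γ ∧ proj f γ = 0

/-- `G` is a signature Gröbner basis in signature `T` -/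
def IsSigGBIn [NeZero m] (O : SigOrder n m) (f : Fin m → MvPolynomial (Fin n) K)
    (G : Set (Fin m → MvPolynomial (Fin n) K)) (T : (Fin n →₀ ℕ) × Fin m) : Prop :=
  ∀ α : Fin m → MvPolynomial (Fin n) K, α ≠ 0 → sigMon O α = T → SReducesToZero O f G α

/-- `G` is a signature Gröbner basis up to signature `T` -/
def IsSigGBUpTo [NeZero m] (O : SigOrder n m) (f : Fin m → MvPolynomial (Fin n) K)
    (G : Set (Fin m → MvPolynomial (Fin n) K)) (T : (Fin n →₀ ℕ) × Fin m) : Prop :=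
  ∀ S, O.mlt S T → IsSigGBIn O f G S

/-- `G` is a signature Gröbner basis -/
def IsSigGB [NeZero m] (O : SigOrder n m) (f : Fin m → MvPolynomial (Fin n) K)
    (G : Set (Fin m → MvPolynomial (Fin n) K)) : Prop :=
  ∀ T, IsSigGBIn O f G T

/-- the monic least common multiple of two monomials (componentwise max) -/
noncomputable def monLcm (μ ν : Fin n →₀ ℕ) : Fin n →₀ ℕ :=
  Finsupp.zipWith max (max_self 0) μ ν

/-- the S-pair `spair(α,β) = (λ/lt(π α))·α − (λ/lt(π β))·β` -/
noncomputable def spair (O : SigOrder n m) (f α β : Fin m → MvPolynomial (Fin n) K) :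
    Fin m → MvPolynomial (Fin n) K :=
  (monomial (monLcm (leadMon O (proj f α)) (leadMon O (proj f β)) - leadMon O (proj f α))
      (leadCoeff O (proj f α))⁻¹ : MvPolynomial (Fin n) K) • α -
  (monomial (monLcm (leadMon O (proj f α)) (leadMon O (proj f β)) - leadMon O (proj f β))
      (leadCoeff O (proj f β))⁻¹ : MvPolynomial (Fin n) K) • β

/-- `spair(α,β)` is a regular S-pair: `π α ≠ 0 ≠ π β` and the signatures of the two
halves differ -/
def IsRegularSPair [NeZero m] (O : SigOrder n m)
    (f α β : Fin m → MvPolynomial (Fin n) K) : Prop :=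
  proj f α ≠ 0 ∧ proj f β ≠ 0 ∧
  sigMon O ((monomial (monLcm (leadMon O (proj f α)) (leadMon O (proj f β)) -
      leadMon O (proj f α)) (leadCoeff O (proj f α))⁻¹ : MvPolynomial (Fin n) K) • α) ≠
  sigMon O ((monomial (monLcm (leadMon O (proj f α)) (leadMon O (proj f β)) -
      leadMon O (proj f β)) (leadCoeff O (proj f β))⁻¹ : MvPolynomial (Fin n) K) • β)

/-- the signature `T` is predictably syzygy: some syzygy `s` has `σ(s) < T` and
`σ(s) ∣ T` -/
def PredictablySyzygy [NeZero m] (O : SigOrder n m) (f : Fin m → MvPolynomial (Fin n) K)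
    (T : (Fin n →₀ ℕ) × Fin m) : Prop :=
  ∃ s : Fin m → MvPolynomial (Fin n) K, s ≠ 0 ∧ proj f s = 0 ∧
    O.mlt (sigMon O s) T ∧ mmDvd (sigMon O s) T

/-- a rewrite order on `G ∪ H`: a partial order that is total on `G` -/
def IsRewriteOrder (G H : Set (Fin m → MvPolynomial (Fin n) K))
    (rew : (Fin m → MvPolynomial (Fin n) K) → (Fin m → MvPolynomial (Fin n) K) → Prop) :
    Prop :=
  (∀ α ∈ G ∪ H, rew α α) ∧
  (∀ α β γ : Fin m → MvPolynomial (Fin n) K, rew α β → rew β γ → rew α γ) ∧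
  (∀ α β : Fin m → MvPolynomial (Fin n) K, rew α β → rew β α → α = β) ∧
  (∀ α ∈ G, ∀ β ∈ G, rew α β ∨ rew β α)

/-- `β` admits a rewriter in signature `T`, i.e. some monomial multiple of `β` has
signature `T` -/
def IsRewriterIn [NeZero m] (O : SigOrder n m) (β : Fin m → MvPolynomial (Fin n) K)
    (T : (Fin n →₀ ℕ) × Fin m) : Prop :=
  ∃ a : Fin n →₀ ℕ, sigMon O ((monomial a (1 : K) : MvPolynomial (Fin n) K) • β) = T

/-- `x^a·α` is the canonical rewriter in signature `T` w.r.t. `rew`: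
`α ∈ G ∪ H`, `σ(x^a·α) = T`, and `α` is `rew`-maximal among elements of `G ∪ H`
admitting a rewriter in `T` -/
def IsCanonicalRewriter [NeZero m] (O : SigOrder n m)
    (G H : Set (Fin m → MvPolynomial (Fin n) K))
    (rew : (Fin m → MvPolynomial (Fin n) K) → (Fin m → MvPolynomial (Fin n) K) → Prop)
    (α : Fin m → MvPolynomial (Fin n) K) (a : Fin n →₀ ℕ)
    (T : (Fin n →₀ ℕ) × Fin m) : Prop :=
  α ∈ G ∪ H ∧ sigMon O ((monomial a (1 : K) : MvPolynomial (Fin n) K) • α) = T ∧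
  ∀ β ∈ G ∪ H, IsRewriterIn O β T → rew β α

/-- `γ` is regular top s-reducible w.r.t. `G` -/
def RegTopSReducible [NeZero m] (O : SigOrder n m) (f : Fin m → MvPolynomial (Fin n) K)
    (G : Set (Fin m → MvPolynomial (Fin n) K))
    (γ : Fin m → MvPolynomial (Fin n) K) : Prop :=
  ∃ β ∈ G, ∃ b, RegSRed O f γ β b (leadMon O (proj f γ))

/-- `G` is a rewrite basis in signature `T`: the canonical rewriter in `T` is not
regular top s-reducible w.r.t. `G` -/
def IsRewriteBasisIn [NeZero m] (O : SigOrder n m) (f : Fin m → MvPolynomial (Fin n) K)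
    (G H : Set (Fin m → MvPolynomial (Fin n) K))
    (rew : (Fin m → MvPolynomial (Fin n) K) → (Fin m → MvPolynomial (Fin n) K) → Prop)
    (T : (Fin n →₀ ℕ) × Fin m) : Prop :=
  ∀ (α : Fin m → MvPolynomial (Fin n) K) (a : Fin n →₀ ℕ),
    IsCanonicalRewriter O G H rew α a T →
    ¬ RegTopSReducible O f G ((monomial a (1 : K) : MvPolynomial (Fin n) K) • α)

/-- `G` is a rewrite basis up to signature `T` -/
def IsRewriteBasisUpTo [NeZero m] (O : SigOrder n m) (f : Fin m → MvPolynomial (Fin n) K)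
    (G H : Set (Fin m → MvPolynomial (Fin n) K))
    (rew : (Fin m → MvPolynomial (Fin n) K) → (Fin m → MvPolynomial (Fin n) K) → Prop)
    (T : (Fin n →₀ ℕ) × Fin m) : Prop :=
  ∀ S, O.mlt S T → IsRewriteBasisIn O f G H rew S

/-- one ordinary polynomial reduction step w.r.t. a set `G` of polynomials -/
def PolyRedStep (O : SigOrder n m) (G : Set (MvPolynomial (Fin n) K))
    (p q : MvPolynomial (Fin n) K) : Prop :=
  ∃ g ∈ G, ∃ (b : MvPolynomial (Fin n) K) (μ : Fin n →₀ ℕ),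
    IsMonomial b ∧ p.coeff μ ≠ 0 ∧
    leadTerm O (b * g) = monomial μ (p.coeff μ) ∧ q = p - b * g

/-- `p` reduces to zero w.r.t. `G` under ordinary polynomial reduction -/
def PolyReducesToZero (O : SigOrder n m) (G : Set (MvPolynomial (Fin n) K))
    (p : MvPolynomial (Fin n) K) : Prop :=
  Relation.ReflTransGen (PolyRedStep O G) p 0

/-- `G` is a Gröbner basis for the ideal `I` -/
def IsGroebnerBasis (O : SigOrder n m) (G : Set (MvPolynomial (Fin n) K))
    (I : Ideal (MvPolynomial (Fin n) K)) : Prop :=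
  G ⊆ ↑I ∧ ∀ p ∈ I, PolyReducesToZero O G p

section Aux

set_option linter.unusedSectionVars false

variable [NeZero m]

lemma exists_max_rel {X : Type*} {r : X → X → Prop} (hto : ∀ a b, r a b ∨ r b a)
    (htr : ∀ {a b c}, r a b → r b c → r a c) (s : Finset X) (hs : s.Nonempty) :
    ∃ x ∈ s, ∀ y ∈ s, r y x := by
  classical
  induction s using Finset.cons_induction with
  | empty => exact absurd hs (by simp)
  | cons a s ha ih =>
    rcases s.eq_empty_or_nonempty with rfl | hne
    · refine ⟨a, by simp, ?_⟩
      intro y hy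
      simp at hy; subst hy
      rcases hto y y with h | h <;> exact h
    · obtain ⟨x, hx, hmax⟩ := ih hne
      rcases hto a x with h | h
      · refine ⟨x, Finset.mem_cons_of_mem hx, ?_⟩
        intro y hy
        rcases Finset.mem_cons.mp hy with rfl | hy
        · exact h
        · exact hmax y hy
      · refine ⟨a, Finset.mem_cons_self a s, ?_⟩
        intro y hy
        rcases Finset.mem_cons.mp hy with rfl | hy
        · rcases hto y y with h' | h' <;> exact h'
        · exact htr (hmax y hy) h

lemma mlt_of_mle_of_mlt {O : SigOrder n m} {S U T : (Fin n →₀ ℕ) × Fin m}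
    (h1 : O.mle S U) (h2 : O.mlt U T) : O.mlt S T :=
  ⟨O.mle_trans h1 h2.1, fun h => h2.2 (O.mle_antisymm h2.1 (h ▸ h1))⟩

lemma leadMon_spec (O : SigOrder n m) {p : MvPolynomial (Fin n) K} (hp : p ≠ 0) :
    leadMon O p ∈ p.support ∧ ∀ ν ∈ p.support, O.rle ν (leadMon O p) := by
  have h : ∃ μ, μ ∈ p.support ∧ ∀ ν ∈ p.support, O.rle ν μ := by
    obtain ⟨x, hx, hmax⟩ := exists_max_rel O.rle_total (fun {a b c} => O.rle_trans)
      p.support (MvPolynomial.support_nonempty.mpr hp)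
    exact ⟨x, hx, hmax⟩
  rw [leadMon, dif_pos h]
  exact h.choose_spec

lemma leadMon_eq (O : SigOrder n m) {p : MvPolynomial (Fin n) K} {μ : Fin n →₀ ℕ}
    (h1 : p.coeff μ ≠ 0) (h2 : ∀ ν ∈ p.support, O.rle ν μ) : leadMon O p = μ := by
  have hp : p ≠ 0 := fun h => h1 (by simp [h])
  obtain ⟨hm, hmax⟩ := leadMon_spec O hp
  exact O.rle_antisymm (h2 _ hm) (hmax _ (MvPolynomial.mem_support_iff.mpr h1))

lemma leadCoeff_ne_zero (O : SigOrder n m) {p : MvPolynomial (Fin n) K} (hp : p ≠ 0) :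
    leadCoeff O p ≠ 0 :=
  MvPolynomial.mem_support_iff.mp (leadMon_spec O hp).1

lemma leadTerm_eq_monomial {O : SigOrder n m} {q : MvPolynomial (Fin n) K}
    {μ : Fin n →₀ ℕ} {c : K} (h : leadTerm O q = monomial μ c) (hc : c ≠ 0) :
    q ≠ 0 ∧ leadMon O q = μ ∧ leadCoeff O q = c := by
  rw [leadTerm] at h
  rcases (MvPolynomial.monomial_eq_monomial_iff _ _ _ _).mp h with ⟨h1, h2⟩ | ⟨h1, h2⟩
  · have hq : q ≠ 0 := by
      intro h0
      rw [leadCoeff, h0] at h2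
      exact hc (h2.symm.trans (by simp))
    exact ⟨hq, h1, h2⟩
  · exact absurd h2 hc

/-- the module support of `α` as a finset -/
noncomputable def msupp (α : Fin m → MvPolynomial (Fin n) K) :
    Finset ((Fin n →₀ ℕ) × Fin m) :=
  Finset.univ.biUnion fun i => (α i).support.image fun μ => (μ, i)

lemma mem_msupp {α : Fin m → MvPolynomial (Fin n) K} {S : (Fin n →₀ ℕ) × Fin m} :
    S ∈ msupp α ↔ (α S.2).coeff S.1 ≠ 0 := by
  simp only [msupp, Finset.mem_biUnion, Finset.mem_univ, true_and, Finset.mem_image,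
    MvPolynomial.mem_support_iff]
  constructor
  · rintro ⟨i, μ, hμ, rfl⟩; exact hμ
  · intro h; exact ⟨S.2, S.1, h, rfl⟩

lemma sigMon_spec (O : SigOrder n m) {α : Fin m → MvPolynomial (Fin n) K} (hα : α ≠ 0) :
    (α (sigMon O α).2).coeff (sigMon O α).1 ≠ 0 ∧
      ∀ T : (Fin n →₀ ℕ) × Fin m, (α T.2).coeff T.1 ≠ 0 → O.mle T (sigMon O α) := by
  have h : ∃ S : (Fin n →₀ ℕ) × Fin m, (α S.2).coeff S.1 ≠ 0 ∧
      ∀ T : (Fin n →₀ ℕ) × Fin m, (α T.2).coeff T.1 ≠ 0 → O.mle T S := by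
    have hne : (msupp α).Nonempty := by
      obtain ⟨i, hi⟩ := Function.ne_iff.mp hα
      obtain ⟨μ, hμ⟩ := MvPolynomial.support_nonempty.mpr (by simpa using hi)
      exact ⟨(μ, i), mem_msupp.mpr (MvPolynomial.mem_support_iff.mp hμ)⟩
    obtain ⟨x, hx, hmax⟩ := exists_max_rel O.mle_total (fun {a b c} => O.mle_trans)
      (msupp α) hne
    exact ⟨x, mem_msupp.mp hx, fun T hT => hmax T (mem_msupp.mpr hT)⟩
  rw [sigMon, dif_pos h]
  exact h.choose_spec

lemma sigMon_eq (O : SigOrder n m) {α : Fin m → MvPolynomial (Fin n) K}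
    {S : (Fin n →₀ ℕ) × Fin m} (h1 : (α S.2).coeff S.1 ≠ 0)
    (h2 : ∀ T : (Fin n →₀ ℕ) × Fin m, (α T.2).coeff T.1 ≠ 0 → O.mle T S) :
    sigMon O α = S := by
  have hα : α ≠ 0 := by
    intro h; rw [h] at h1; simp at h1
  obtain ⟨hm, hmax⟩ := sigMon_spec O hα
  exact O.mle_antisymm (h2 _ hm) (hmax _ h1)

lemma sigMon_congr (O : SigOrder n m) {α β : Fin m → MvPolynomial (Fin n) K}
    (hα : α ≠ 0)
    (h : ∀ S : (Fin n →₀ ℕ) × Fin m, ((α S.2).coeff S.1 ≠ 0 ↔ (β S.2).coeff S.1 ≠ 0)) :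
    sigMon O β = sigMon O α := by
  obtain ⟨h1, h2⟩ := sigMon_spec O hα
  exact sigMon_eq O ((h _).mp h1) fun T hT => h2 T ((h T).mpr hT)

lemma proj_zero (f : Fin m → MvPolynomial (Fin n) K) : proj f 0 = 0 := by
  simp [proj]

lemma proj_sub (f α β : Fin m → MvPolynomial (Fin n) K) :
    proj f (α - β) = proj f α - proj f β := by
  simp [proj, Pi.sub_apply, sub_mul, Finset.sum_sub_distrib]

lemma proj_smul (f : Fin m → MvPolynomial (Fin n) K) (b : MvPolynomial (Fin n) K)
    (α : Fin m → MvPolynomial (Fin n) K) : proj f (b • α) = b * proj f α := by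
  simp [proj, Finset.mul_sum, mul_assoc, Pi.smul_apply, smul_eq_mul]

lemma chain_reducer (O : SigOrder n m) (f : Fin m → MvPolynomial (Fin n) K)
    (G : Set (Fin m → MvPolynomial (Fin n) K))
    {γ δ : Fin m → MvPolynomial (Fin n) K} {μ₀ : Fin n →₀ ℕ}
    {T : (Fin n →₀ ℕ) × Fin m}
    (hrtg : Relation.ReflTransGen (Step O f G) γ δ) (hδ : proj f δ = 0)
    (hc : (proj f γ).coeff μ₀ ≠ 0)
    (hsupp : ∀ ν ∈ (proj f γ).support, O.rle ν μ₀)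
    (hsig : ∀ S : (Fin n →₀ ℕ) × Fin m, (γ S.2).coeff S.1 ≠ 0 → O.mlt S T) :
    ∃ β' ∈ G, ∃ b, IsMonomial b ∧ b * proj f β' ≠ 0 ∧
      leadMon O (b * proj f β') = μ₀ ∧ O.mlt (sigMon O (b • β')) T := by
  revert hc hsupp hsig
  induction hrtg using Relation.ReflTransGen.head_induction_on with
  | refl =>
    intro hc _ _
    exact absurd (by simp [hδ]) hc
  | @head γ' γ₁ hstep htail ih =>
    intro hc hsupp hsig
    obtain ⟨β', hβ'G, b, ν, ⟨hbmon, hcν, hlt, hmle⟩, hγ₁⟩ := hstep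
    subst hγ₁
    obtain ⟨hqne, hqlm, hqlc⟩ := leadTerm_eq_monomial hlt hcν
    have hγ0 : γ' ≠ 0 := fun h => hcν (by simp [h, proj_zero])
    obtain ⟨hsγ1, hsγ2⟩ := sigMon_spec O hγ0
    have hmltγ : O.mlt (sigMon O γ') T := hsig _ hsγ1
    have hbb0 : b • β' ≠ 0 := fun h => hqne (by rw [← proj_smul, h, proj_zero])
    have hsigbb : O.mlt (sigMon O (b • β')) T := mlt_of_mle_of_mlt hmle hmltγ
    by_cases hν : ν = μ₀
    · subst hν
      exact ⟨β', hβ'G, b, hbmon, hqne, hqlm, hsigbb⟩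
    · have hq0 : (b * proj f β').coeff μ₀ = 0 := by
        by_contra h0
        have h1 : O.rle μ₀ ν :=
          hqlm ▸ (leadMon_spec O hqne).2 _ (MvPolynomial.mem_support_iff.mpr h0)
        have h2 : O.rle ν μ₀ := hsupp ν (MvPolynomial.mem_support_iff.mpr hcν)
        exact hν (O.rle_antisymm h2 h1)
      have hproj : proj f (γ' - b • β') = proj f γ' - b * proj f β' := by
        rw [proj_sub, proj_smul]
      apply ih
      · rw [hproj, MvPolynomial.coeff_sub, hq0, sub_zero]
        exact hc
      · intro ρ hρ
        rw [hproj, MvPolynomial.mem_support_iff, MvPolynomial.coeff_sub] at hρ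
        by_cases h1 : (proj f γ').coeff ρ ≠ 0
        · exact hsupp ρ (MvPolynomial.mem_support_iff.mpr h1)
        · push_neg at h1
          have h2 : (b * proj f β').coeff ρ ≠ 0 := fun h => hρ (by rw [h1, h, sub_zero])
          have h3 : O.rle ρ ν :=
            hqlm ▸ (leadMon_spec O hqne).2 _ (MvPolynomial.mem_support_iff.mpr h2)
          exact O.rle_trans h3 (hsupp ν (MvPolynomial.mem_support_iff.mpr hcν))
      · intro S hS
        rw [Pi.sub_apply, MvPolynomial.coeff_sub] at hS
        by_cases h1 : (γ' S.2).coeff S.1 ≠ 0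
        · exact hsig S h1
        · push_neg at h1
          have h2 : ((b • β') S.2).coeff S.1 ≠ 0 := fun h => hS (by rw [h1, h, sub_zero])
          exact mlt_of_mle_of_mlt ((sigMon_spec O hbb0).2 S h2) hsigbb

lemma rescale (O : SigOrder n m) (f : Fin m → MvPolynomial (Fin n) K)
    {β' : Fin m → MvPolynomial (Fin n) K} {b : MvPolynomial (Fin n) K}
    {μ₀ : Fin n →₀ ℕ} {p : MvPolynomial (Fin n) K}
    (hb : IsMonomial b) (hq : b * proj f β' ≠ 0)
    (hlm : leadMon O (b * proj f β') = μ₀) (hp : p.coeff μ₀ ≠ 0) :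
    ∃ b', IsMonomial b' ∧
      leadTerm O (b' * proj f β') = monomial μ₀ (p.coeff μ₀) ∧
      sigMon O (b' • β') = sigMon O (b • β') := by
  obtain ⟨ν, c, hc, rfl⟩ := hb
  set q := (monomial ν c : MvPolynomial (Fin n) K) * proj f β' with hqdef
  have he : leadCoeff O q ≠ 0 := leadCoeff_ne_zero O hq
  set d := p.coeff μ₀ / leadCoeff O q with hd
  have hd0 : d ≠ 0 := div_ne_zero hp he
  have hmul : (monomial ν (d * c) : MvPolynomial (Fin n) K) * proj f β' = C d * q := by
    rw [hqdef, ← mul_assoc, MvPolynomial.C_mul_monomial]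
  have hqμ : q.coeff μ₀ ≠ 0 := by
    have := (leadMon_spec O hq).1
    rw [hlm] at this
    exact MvPolynomial.mem_support_iff.mp this
  have hlm2 : leadMon O (C d * q) = μ₀ := by
    apply leadMon_eq
    · rw [MvPolynomial.coeff_C_mul]
      exact mul_ne_zero hd0 hqμ
    · intro ρ hρ
      rw [MvPolynomial.mem_support_iff, MvPolynomial.coeff_C_mul] at hρ
      have h2 : q.coeff ρ ≠ 0 := fun h => hρ (by rw [h, mul_zero])
      exact hlm ▸ (leadMon_spec O hq).2 ρ (MvPolynomial.mem_support_iff.mpr h2)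
  refine ⟨monomial ν (d * c), ⟨ν, d * c, mul_ne_zero hd0 hc, rfl⟩, ?_, ?_⟩
  · rw [hmul, leadTerm, hlm2, leadCoeff, hlm2, MvPolynomial.coeff_C_mul]
    congr 1
    have hlcq : q.coeff μ₀ = leadCoeff O q := by rw [leadCoeff, hlm]
    rw [hlcq, hd, div_mul_cancel₀ _ he]
  · apply sigMon_congr O (show (monomial ν c : MvPolynomial (Fin n) K) • β' ≠ 0 from
      fun h => hq (by rw [hqdef, ← proj_smul, h, proj_zero]))
    intro S
    have h1 : ((monomial ν (d * c) : MvPolynomial (Fin n) K) • β') S.2 =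
        C d * (((monomial ν c : MvPolynomial (Fin n) K) • β') S.2) := by
      simp only [Pi.smul_apply, smul_eq_mul, ← mul_assoc, MvPolynomial.C_mul_monomial]
    rw [h1, MvPolynomial.coeff_C_mul]
    constructor
    · intro h h'
      rcases mul_eq_zero.mp h' with h'' | h''
      · exact hd0 h''
      · exact h h''
    · intro h h'
      exact h (by rw [h', mul_zero])

lemma main_reducer (O : SigOrder n m) (f : Fin m → MvPolynomial (Fin n) K)
    (G : Set (Fin m → MvPolynomial (Fin n) K))
    {γ τ : Fin m → MvPolynomial (Fin n) K} {μ₀ : Fin n →₀ ℕ}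
    {T : (Fin n →₀ ℕ) × Fin m}
    (hred : SReducesToZero O f G γ)
    (hsig : ∀ S : (Fin n →₀ ℕ) × Fin m, (γ S.2).coeff S.1 ≠ 0 → O.mlt S T)
    (hTτ : sigMon O τ = T)
    (hc : (proj f γ).coeff μ₀ ≠ 0)
    (hsupp : ∀ ν ∈ (proj f γ).support, O.rle ν μ₀)
    (hpc : (proj f τ).coeff μ₀ ≠ 0) :
    ∃ β' ∈ G, ∃ b', RegSRed O f τ β' b' μ₀ := by
  obtain ⟨δ, hrtg, hδ⟩ := hred
  obtain ⟨β', hβ'G, b, hbmon, hqne, hqlm, hsigbb⟩ :=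
    chain_reducer O f G hrtg hδ hc hsupp hsig
  obtain ⟨b', hb'mon, hlt', hsig'⟩ := rescale O f hbmon hqne hqlm hpc
  refine ⟨β', hβ'G, b', ⟨⟨hb'mon, hpc, hlt', ?_⟩, ?_⟩⟩
  · rw [hsig', hTτ]
    exact hsigbb.1
  · rw [hsig', hTτ]
    exact hsigbb.2

lemma sig_bound (O : SigOrder n m) {α β : Fin m → MvPolynomial (Fin n) K}
    (hα : α ≠ 0) (hβ : β ≠ 0)
    (hsigm : sigMon O α = sigMon O β) (hsigc : sigCoeff O α = sigCoeff O β) :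
    ∀ S : (Fin n →₀ ℕ) × Fin m, ((α - β) S.2).coeff S.1 ≠ 0 → O.mlt S (sigMon O α) := by
  intro S hS
  rw [Pi.sub_apply, MvPolynomial.coeff_sub] at hS
  have hne : (α S.2).coeff S.1 ≠ (β S.2).coeff S.1 := fun h => hS (by rw [h, sub_self])
  have hSne : S ≠ sigMon O α := by
    rintro rfl
    have h2 : sigCoeff O β = (β (sigMon O α).2).coeff (sigMon O α).1 := by
      rw [sigCoeff, ← hsigm]
    exact hne (by
      rw [show (α (sigMon O α).2).coeff (sigMon O α).1 = sigCoeff O α from rfl, hsigc, h2])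
  have hmle : O.mle S (sigMon O α) := by
    by_cases h1 : (α S.2).coeff S.1 ≠ 0
    · exact (sigMon_spec O hα).2 S h1
    · push_neg at h1
      have h2 : (β S.2).coeff S.1 ≠ 0 := fun h => hne (h1.trans h.symm)
      exact hsigm ▸ (sigMon_spec O hβ).2 S h2
  exact ⟨hmle, hSne⟩

end Aux

set_option maxHeartbeats 2000000 in
/-- For `α, β` with `σ(α) = σ(β)` and `G` a signature Gröbner basis up
to `σ(α)`: if both are regular top s-reduced then `lt(π α) = lt(π β)` or
`π α = π β = 0`; if both are regular s-reduced then `π α = π β`. -/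
theorem statement2 {K : Type*} [Field K] {n m : ℕ} [NeZero m]
    (O : SigOrder n m) (f : Fin m → MvPolynomial (Fin n) K)
    (G : Finset (Fin m → MvPolynomial (Fin n) K))
    (α β : Fin m → MvPolynomial (Fin n) K) (hα : α ≠ 0) (hβ : β ≠ 0)
    (hsigm : sigMon O α = sigMon O β) (hsigc : sigCoeff O α = sigCoeff O β)
    (hGB : IsSigGBUpTo O f ↑G (sigMon O α)) :
    (¬ RegTopSReducible O f ↑G α → ¬ RegTopSReducible O f ↑G β →
      (leadTerm O (proj f α) = leadTerm O (proj f β) ∨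
        (proj f α = 0 ∧ proj f β = 0))) ∧
    ((∀ γ, ¬ RegStep O f ↑G α γ) → (∀ γ, ¬ RegStep O f ↑G β γ) →
      proj f α = proj f β) := by
  classical
  set p := proj f α - proj f β with hpdef
  have hsig : ∀ S : (Fin n →₀ ℕ) × Fin m,
      ((α - β) S.2).coeff S.1 ≠ 0 → O.mlt S (sigMon O α) :=
    sig_bound O hα hβ hsigm hsigc
  have hprojγ : proj f (α - β) = p := by rw [proj_sub, hpdef]
  have hkey : ∀ μ₀ : Fin n →₀ ℕ, ∀ hp0 : p ≠ 0, leadMon O p = μ₀ →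
      ∀ τ : Fin m → MvPolynomial (Fin n) K, sigMon O τ = sigMon O α →
      (proj f τ).coeff μ₀ ≠ 0 →
      ∃ β' ∈ (G : Set (Fin m → MvPolynomial (Fin n) K)), ∃ b', RegSRed O f τ β' b' μ₀ := by
    intro μ₀ hp0 hlm τ hτ hpc
    have hγ0 : α - β ≠ 0 := fun h => hp0 (by rw [← hprojγ, h, proj_zero])
    have hmlt : O.mlt (sigMon O (α - β)) (sigMon O α) := hsig _ (sigMon_spec O hγ0).1
    have hred : SReducesToZero O f ↑G (α - β) :=
      hGB (sigMon O (α - β)) hmlt (α - β) hγ0 rfl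
    have hcp : (proj f (α - β)).coeff μ₀ ≠ 0 := by
      rw [hprojγ, ← hlm]
      exact MvPolynomial.mem_support_iff.mp (leadMon_spec O hp0).1
    have hsupp : ∀ ν ∈ (proj f (α - β)).support, O.rle ν μ₀ := by
      rw [hprojγ, ← hlm]
      exact (leadMon_spec O hp0).2
    exact main_reducer O f ↑G hred hsig hτ hcp hsupp hpc
  have hor : ∀ hp0 : p ≠ 0,
      (proj f α).coeff (leadMon O p) ≠ 0 ∨ (proj f β).coeff (leadMon O p) ≠ 0 := by
    intro hp0
    by_contra h
    push_neg at h
    have hcp : p.coeff (leadMon O p) ≠ 0 :=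
      MvPolynomial.mem_support_iff.mp (leadMon_spec O hp0).1
    exact hcp (by rw [hpdef, MvPolynomial.coeff_sub, h.1, h.2, sub_zero])
  have hEqAbove : ∀ hp0 : p ≠ 0, ∀ ρ : Fin n →₀ ℕ, ρ ≠ leadMon O p →
      O.rle (leadMon O p) ρ → (proj f α).coeff ρ = (proj f β).coeff ρ := by
    intro hp0 ρ hρne hρle
    have h0 : p.coeff ρ = 0 := by
      by_contra h0
      exact hρne (O.rle_antisymm
        ((leadMon_spec O hp0).2 ρ (MvPolynomial.mem_support_iff.mpr h0)) hρle)
    rw [hpdef, MvPolynomial.coeff_sub, sub_eq_zero] at h0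
    exact h0
  have htri : ∀ hp0 : p ≠ 0,
      ∀ τ : Fin m → MvPolynomial (Fin n) K, (τ = α ∨ τ = β) →
      (proj f τ).coeff (leadMon O p) ≠ 0 → leadMon O p ≠ leadMon O (proj f τ) →
      leadTerm O (proj f α) = leadTerm O (proj f β) := by
    intro hp0 τ hτ hcτ hne1
    -- let σ be the other one
    obtain ⟨τ', hτ', hEq⟩ : ∃ τ', ((τ = α ∧ τ' = β) ∨ (τ = β ∧ τ' = α)) ∧
        (∀ ρ : Fin n →₀ ℕ, ρ ≠ leadMon O p → O.rle (leadMon O p) ρ →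
          (proj f τ).coeff ρ = (proj f τ').coeff ρ) := by
      rcases hτ with rfl | rfl
      · exact ⟨β, Or.inl ⟨rfl, rfl⟩, hEqAbove hp0⟩
      · exact ⟨α, Or.inr ⟨rfl, rfl⟩, fun ρ h1 h2 => (hEqAbove hp0 ρ h1 h2).symm⟩
    have hτ0 : proj f τ ≠ 0 := fun h => hcτ (by rw [h]; simp)
    have h1 : O.rle (leadMon O p) (leadMon O (proj f τ)) :=
      (leadMon_spec O hτ0).2 _ (MvPolynomial.mem_support_iff.mpr hcτ)
    have hEq1 : (proj f τ).coeff (leadMon O (proj f τ)) =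
        (proj f τ').coeff (leadMon O (proj f τ)) :=
      hEq _ (fun h => hne1 h.symm) h1
    have hτ'c : (proj f τ').coeff (leadMon O (proj f τ)) ≠ 0 := by
      rw [← hEq1]
      exact MvPolynomial.mem_support_iff.mp (leadMon_spec O hτ0).1
    have hτ'0 : proj f τ' ≠ 0 := fun h => hτ'c (by rw [h]; simp)
    have h2 : O.rle (leadMon O (proj f τ)) (leadMon O (proj f τ')) :=
      (leadMon_spec O hτ'0).2 _ (MvPolynomial.mem_support_iff.mpr hτ'c)
    have hne2 : leadMon O (proj f τ') ≠ leadMon O p := by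
      intro h
      rw [h] at h2
      exact hne1 (O.rle_antisymm h1 h2)
    have hEq2 : (proj f τ).coeff (leadMon O (proj f τ')) =
        (proj f τ').coeff (leadMon O (proj f τ')) :=
      hEq _ hne2 (O.rle_trans h1 h2)
    have hτc2 : (proj f τ).coeff (leadMon O (proj f τ')) ≠ 0 := by
      rw [hEq2]
      exact MvPolynomial.mem_support_iff.mp (leadMon_spec O hτ'0).1
    have h3 : O.rle (leadMon O (proj f τ')) (leadMon O (proj f τ)) :=
      (leadMon_spec O hτ0).2 _ (MvPolynomial.mem_support_iff.mpr hτc2)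
    have hlmeq : leadMon O (proj f τ) = leadMon O (proj f τ') := O.rle_antisymm h2 h3
    have hlt : leadTerm O (proj f τ) = leadTerm O (proj f τ') := by
      rw [leadTerm, leadTerm, hlmeq, leadCoeff, leadCoeff, hlmeq, hEq2]
    rcases hτ' with ⟨rfl, rfl⟩ | ⟨rfl, rfl⟩
    · exact hlt
    · exact hlt.symm
  constructor
  · intro hA hB
    by_cases hpq : proj f α = proj f β
    · left
      rw [hpq]
    · have hp0 : p ≠ 0 := fun h => hpq (by rwa [hpdef, sub_eq_zero] at h)
      rcases hor hp0 with hcα | hcβ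
      · by_cases heq : leadMon O p = leadMon O (proj f α)
        · obtain ⟨β', hβ'G, b', hreg⟩ := hkey (leadMon O p) hp0 rfl α rfl hcα
          exact absurd ⟨β', hβ'G, b', heq ▸ hreg⟩ hA
        · exact Or.inl (htri hp0 α (Or.inl rfl) hcα heq)
      · by_cases heq : leadMon O p = leadMon O (proj f β)
        · obtain ⟨β', hβ'G, b', hreg⟩ := hkey (leadMon O p) hp0 rfl β hsigm.symm hcβ
          exact absurd ⟨β', hβ'G, b', heq ▸ hreg⟩ hB
        · exact Or.inl (htri hp0 β (Or.inr rfl) hcβ heq)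
  · intro hA hB
    by_contra hne
    have hp0 : p ≠ 0 := fun h => hne (by rwa [hpdef, sub_eq_zero] at h)
    rcases hor hp0 with hcα | hcβ
    · obtain ⟨β', hβ'G, b', hreg⟩ := hkey (leadMon O p) hp0 rfl α rfl hcα
      exact hA (α - b' • β') ⟨β', hβ'G, b', leadMon O p, hreg, rfl⟩
    · obtain ⟨β', hβ'G, b', hreg⟩ := hkey (leadMon O p) hp0 rfl β hsigm.symm hcβ
      exact hB (β - b' • β') ⟨β', hβ'G, b', leadMon O p, hreg, rfl⟩


end SigGB
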